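/- Let K be a topological graph whose edge relation R^K is an equivalence relation (a prespace), and suppose K is the inverse limit of finite connected graphs with connected epimorphic bonding maps. If Z ⊆ V ⊆ K with Z saturated under R^K (i.e., Z = [Z]) and V open, then there is an open set W with Z ⊆ W and [W] ⊆ V; moreover if Z is closed, W can be chosen clopen. -/

import Mathlib

/-- A subset `X` of a graph with edge relation `R` is connected if for all nonempty
`U₁, U₂ ⊆ X` with `X = U₁ ∪ U₂` there is an edge between `U₁` and `U₂`. -/
def FinConn {V : Type*} (R : V → V → Prop) (X : Set V) : Prop :=
  ∀ U₁ U₂ : Set V, U₁ ⊆ X → U₂ ⊆ X → U₁.Nonempty → U₂.Nonempty → X = U₁ ∪ U₂ →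
    ∃ x₁ ∈ U₁, ∃ x₂ ∈ U₂, R x₁ x₂

/-- A graph epimorphism: a homomorphism surjective on vertices and on edges. -/
def IsEpi {V W : Type*} (RB : V → V → Prop) (RA : W → W → Prop) (f : V → W) : Prop :=
  (∀ b b', RB b b' → RA (f b) (f b')) ∧ Function.Surjective f ∧
    (∀ a a', RA a a' → ∃ b b', RB b b' ∧ f b = a ∧ f b' = a')

/-- A connected epimorphism: an epimorphism such that the preimage of every connected
subset is connected. -/
def IsConnEpi {V W : Type*} (RB : V → V → Prop) (RA : W → W → Prop) (f : V → W) : Prop :=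
  IsEpi RB RA f ∧ ∀ X : Set W, FinConn RA X → FinConn RB (f ⁻¹' X)

/-- Connectedness of a subset of a topological graph. -/
def TopConn {K : Type*} [TopologicalSpace K] (R : K → K → Prop) (X : Set K) : Prop :=
  ∀ U₁ U₂ : Set K, IsOpen U₁ → IsOpen U₂ → (X ∩ U₁).Nonempty → (X ∩ U₂).Nonempty →
    X ⊆ U₁ ∪ U₂ → ∃ x₁ ∈ X ∩ U₁, ∃ x₂ ∈ X ∩ U₂, R x₁ x₂

/-- The inverse limit of a sequence of (finite, discrete) sets with bonding maps. -/
def InvLim (K : ℕ → Type) (f : ∀ n, K (n+1) → K n) : Type :=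
  {x : ∀ n, K n // ∀ n, f n (x (n+1)) = x n}

/-- The inverse-limit topology, where each `K n` carries the discrete topology. -/
instance InvLim.topologicalSpace (K : ℕ → Type) (f : ∀ n, K (n+1) → K n) :
    TopologicalSpace (InvLim K f) :=
  @instTopologicalSpaceSubtype _ _ (@Pi.topologicalSpace ℕ K (fun _ => ⊥))

/-- The coordinatewise edge relation on the inverse limit. -/
def limR {K : ℕ → Type} (R : ∀ n, K n → K n → Prop) {f : ∀ n, K (n+1) → K n}
    (x y : InvLim K f) : Prop :=
  ∀ n, R n (x.1 n) (y.1 n)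

/-- The saturation of a set under the relation. -/
def sat {K : ℕ → Type} (R : ∀ n, K n → K n → Prop) {f : ∀ n, K (n+1) → K n}
    (S : Set (InvLim K f)) : Set (InvLim K f) :=
  {y | ∃ x ∈ S, limR R x y}

/-!
The level-`n` relations `R n` on the `n`-th coordinates are closed, decreasing in `n`, and their
intersection is `limR R`. If `sat R C ⊆ V` with `C` compact, transitivity of `limR R` and
compactness of `C ×ˢ univ ×ˢ Vᶜ` produce a single level `N` such that two `R N`-steps from `C`
never leave `V`. The level-`N` saturation of `C` is then a clopen neighbourhood of `C` whose saturation
lies in `V`: for closed `Z` take `C = Z`, and for arbitrary `Z` take the union over `C = {z}`.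
-/

open Set

theorem sat_mono {K : ℕ → Type} {R : ∀ n, K n → K n → Prop} {f : ∀ n, K (n+1) → K n}
    {S T : Set (InvLim K f)} (h : S ⊆ T) : sat R S ⊆ sat R T :=
  fun _ ⟨x, hx, hxy⟩ => ⟨x, h hx, hxy⟩

namespace InvLim

variable {K : ℕ → Type} {f : ∀ n, K (n+1) → K n}

theorem isClopen_setOf_coord_mem (n : ℕ) (S : Set (K n)) :
    IsClopen {x : InvLim K f | x.1 n ∈ S} := by
  let : ∀ i, TopologicalSpace (K i) := fun _ => ⊥
  have : ∀ i, DiscreteTopology (K i) := fun _ => ⟨rfl⟩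
  exact (isClopen_discrete S).preimage ((continuous_apply n).comp continuous_subtype_val)

theorem isClosed_setOf_coord_pair_mem (n : ℕ) (S : Set (K n × K n)) :
    IsClosed {p : InvLim K f × InvLim K f | (p.1.1 n, p.2.1 n) ∈ S} := by
  let : ∀ i, TopologicalSpace (K i) := fun _ => ⊥
  have : ∀ i, DiscreteTopology (K i) := fun _ => ⟨rfl⟩
  have hcoord : Continuous fun x : InvLim K f => x.1 n :=
    (continuous_apply n).comp continuous_subtype_val
  exact (isClosed_discrete S).preimage
    ((hcoord.comp continuous_fst).prodMk (hcoord.comp continuous_snd))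

instance compactSpace [∀ n, Finite (K n)] : CompactSpace (InvLim K f) := by
  let : ∀ i, TopologicalSpace (K i) := fun _ => ⊥
  have : ∀ i, DiscreteTopology (K i) := fun _ => ⟨rfl⟩
  have hthreads : IsClosed {x : ∀ n, K n | ∀ n, f n (x (n+1)) = x n} := by
    rw [ofPred_forall]
    exact isClosed_iInter fun n =>
      isClosed_eq (continuous_of_discreteTopology.comp (continuous_apply (n+1)))
        (continuous_apply n)
  exact isCompact_iff_compactSpace.mp hthreads.isCompact

variable (R : ∀ n, K n → K n → Prop)

def levelRel (n : ℕ) : Set (InvLim K f × InvLim K f) :=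
  {p | R n (p.1.1 n) (p.2.1 n)}

def levelSat (n : ℕ) (C : Set (InvLim K f)) : Set (InvLim K f) :=
  {y | ∃ z ∈ C, (z, y) ∈ levelRel R n}

variable {R}

theorem isClosed_levelRel (n : ℕ) : IsClosed (levelRel R n : Set (InvLim K f × InvLim K f)) :=
  isClosed_setOf_coord_pair_mem n {ab | R n ab.1 ab.2}

theorem isClopen_levelSat (n : ℕ) (C : Set (InvLim K f)) : IsClopen (levelSat R n C) :=
  isClopen_setOf_coord_mem n {b | ∃ z ∈ C, R n (z.1 n) b}

theorem subset_levelSat (hrefl : ∀ n (x : K n), R n x x) (n : ℕ) (C : Set (InvLim K f)) :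
    C ⊆ levelSat R n C :=
  fun z hz => ⟨z, hz, hrefl n _⟩

theorem levelRel_antitone (hR : ∀ n a b, R (n+1) a b → R n (f n a) (f n b)) :
    Antitone (levelRel R : ℕ → Set (InvLim K f × InvLim K f)) := by
  refine antitone_nat_of_succ_le fun n p hp => ?_
  have h := hR n _ _ hp
  rwa [p.1.2 n, p.2.2 n] at h

theorem exists_sat_levelSat_subset [∀ n, Finite (K n)]
    (hR : ∀ n a b, R (n+1) a b → R n (f n a) (f n b)) (htrans : Transitive (limR R (f := f)))
    {C V : Set (InvLim K f)} (hC : IsCompact C) (hV : IsOpen V) (hCV : sat R C ⊆ V) :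
    ∃ N, sat R (levelSat R N C) ⊆ V := by
  let T : ℕ → Set (InvLim K f × InvLim K f × InvLim K f) := fun N =>
    {q | (q.1, q.2.1) ∈ levelRel R N ∧ (q.2.1, q.2.2) ∈ levelRel R N}
  have hT_closed : ∀ N, IsClosed (T N) := fun N =>
    ((isClosed_levelRel N).preimage (by fun_prop)).inter
      ((isClosed_levelRel N).preimage (by fun_prop))
  have hT_antitone : Antitone T := fun m n hmn q hq =>
    ⟨levelRel_antitone hR hmn hq.1, levelRel_antitone hR hmn hq.2⟩
  have hcompact : IsCompact (C ×ˢ (univ : Set (InvLim K f)) ×ˢ Vᶜ) :=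
    hC.prod (isCompact_univ.prod hV.isClosed_compl.isCompact)
  have hdisjoint : C ×ˢ univ ×ˢ Vᶜ ∩ ⋂ N, T N = ∅ := by
    refine eq_empty_of_forall_notMem fun ⟨z, y, w⟩ ⟨⟨hz, _, hw⟩, hT⟩ => hw (hCV ⟨z, hz, ?_⟩)
    have hzy : limR R z y := fun n => (mem_iInter.mp hT n).1
    have hyw : limR R y w := fun n => (mem_iInter.mp hT n).2
    exact htrans hzy hyw
  obtain ⟨N, hN⟩ := hcompact.elim_directed_family_closed T hT_closed hdisjoint
    hT_antitone.directed_ge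
  refine ⟨N, ?_⟩
  rintro w ⟨y, ⟨z, hz, hzy⟩, hyw⟩
  by_contra hw
  exact (eq_empty_iff_forall_notMem.mp hN) (z, y, w) ⟨⟨hz, trivial, hw⟩, hzy, hyw N⟩

theorem exists_isClopen_superset_sat_subset [∀ n, Finite (K n)]
    (hrefl : ∀ n (x : K n), R n x x) (hR : ∀ n a b, R (n+1) a b → R n (f n a) (f n b))
    (htrans : Transitive (limR R (f := f)))
    {C V : Set (InvLim K f)} (hC : IsCompact C) (hV : IsOpen V) (hCV : sat R C ⊆ V) :
    ∃ W, IsClopen W ∧ C ⊆ W ∧ sat R W ⊆ V :=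
  let ⟨N, hN⟩ := exists_sat_levelSat_subset hR htrans hC hV hCV
  ⟨levelSat R N C, isClopen_levelSat N C, subset_levelSat hrefl N C, hN⟩

end InvLim

theorem prespace_saturation_separation_general
    (K : ℕ → Type) [∀ n, Fintype (K n)]
    (R : ∀ n, K n → K n → Prop)
    (hrefl : ∀ n (x : K n), R n x x)
    (f : ∀ n, K (n+1) → K n) (hf : ∀ n, IsConnEpi (R (n+1)) (R n) (f n))
    (htrans : Transitive (limR R (f := f)))
    (Z V : Set (InvLim K f)) (hZV : Z ⊆ V) (hV : IsOpen V)
    (hZsat : sat R Z = Z) :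
    (∃ W : Set (InvLim K f), IsOpen W ∧ Z ⊆ W ∧ sat R W ⊆ V) ∧
    (IsClosed Z → ∃ W : Set (InvLim K f), IsClopen W ∧ Z ⊆ W ∧ sat R W ⊆ V) := by
  have hR : ∀ n a b, R (n+1) a b → R n (f n a) (f n b) := fun n => (hf n).1.1
  have hsatV : sat R Z ⊆ V := hZsat.symm ▸ hZV
  refine ⟨?_, fun hZ => InvLim.exists_isClopen_superset_sat_subset hrefl hR htrans
    hZ.isCompact hV hsatV⟩
  have hpoint : ∀ z ∈ Z, ∃ W, IsClopen W ∧ {z} ⊆ W ∧ sat R W ⊆ V := fun z hz =>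
    InvLim.exists_isClopen_superset_sat_subset hrefl hR htrans isCompact_singleton hV
      ((sat_mono (singleton_subset_iff.mpr hz)).trans hsatV)
  choose! W hW_clopen hzW hWV using hpoint
  refine ⟨⋃ z ∈ Z, W z, isOpen_biUnion fun z hz => (hW_clopen z hz).isOpen,
    fun z hz => mem_biUnion hz (hzW z hz rfl), ?_⟩
  rintro w ⟨y, hy, hyw⟩
  obtain ⟨z, hz, hyz⟩ := mem_iUnion₂.mp hy
  exact hWV z hz ⟨y, hyz, hyw⟩

/-- in a prespace arising as an inverse limit of finite connected graphs
with connected epimorphic bonding maps, a saturated set `Z` contained in an open `V`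
can be separated: there is open `W` with `Z ⊆ W` and `[W] ⊆ V`; if `Z` is closed,
`W` can be chosen clopen. -/
theorem prespace_saturation_separation
    (K : ℕ → Type) [∀ n, Fintype (K n)]
    (R : ∀ n, K n → K n → Prop)
    (hrefl : ∀ n (x : K n), R n x x) (hsymm : ∀ n (x y : K n), R n x y → R n y x)
    (hconn : ∀ n, FinConn (R n) Set.univ)
    (f : ∀ n, K (n+1) → K n) (hf : ∀ n, IsConnEpi (R (n+1)) (R n) (f n))
    (htrans : Transitive (limR R (f := f)))
    (Z V : Set (InvLim K f)) (hZV : Z ⊆ V) (hV : IsOpen V)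
    (hZsat : sat R Z = Z) :
    (∃ W : Set (InvLim K f), IsOpen W ∧ Z ⊆ W ∧ sat R W ⊆ V) ∧
    (IsClosed Z → ∃ W : Set (InvLim K f), IsClopen W ∧ Z ⊆ W ∧ sat R W ⊆ V) :=
  prespace_saturation_separation_general K R hrefl f hf htrans Z V hZV hV hZsat
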